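/- arXiv:0904.2254 — 5 statements merged into one kernel-verified Lean document; each statement's English description precedes it below -/
import Mathlib

section
/- Let X be a stationary Markov chain on a finite state space S = {1, …, N} with transition matrix P = (p_{ij}) and invariant probability distribution π = (π_1, …, π_N) (so π P = π and π_i > 0 for all i). Then there exists a finite collection of directed cycles c = (i_1, …, i_k) of states, with a positive weight w_c for each cycle in the collection, such that for all i, j ∈ S: π_i p_{ij} = Σ_c w_c J_c(i,j), where J_c(i,j) = 1 if the directed cycle c contains the transition i → j and J_c(i,j) = 0 otherwise. -/
open scoped Classical

/-- A directed cycle `(i_0, …, i_len)` of pairwise distinct states in the state space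
`Fin N`, understood cyclically. -/
structure MCycle (N : ℕ) where
  len : ℕ
  f : Fin (len + 1) → Fin N
  inj : Function.Injective f

/-- `J c i j` is the indicator that the directed cycle `c` contains the transition
`i → j`, i.e. that `j` immediately follows `i` in the cyclic order of `c`. -/
noncomputable def MCycle.J {N : ℕ} (c : MCycle N) (i j : Fin N) : ℝ :=
  if ∃ l, c.f l = i ∧ c.f (l + 1) = j then 1 else 0

/-!
The flow `Q i j = π i * P i j` of a stationary chain is a nonnegative circulation: out-flow
`π i` equals in-flow `(π P) i`. In the support of a nonzero nonnegative circulation every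
vertex with positive out-flow has a successor with positive out-flow, so following successors
in a finite state space closes a directed cycle. Subtracting that cycle with the weight of its
lightest edge leaves a nonnegative circulation with strictly smaller support, and induction on
the support finishes the decomposition.
-/

open Function Finset

section Circulation

variable {α : Type*} [Fintype α]

def IsCirculation (Q : α → α → ℝ) : Prop :=
  ∀ v, ∑ j, Q v j = ∑ i, Q i v

lemma IsCirculation.sub {Q R : α → α → ℝ} (hQ : IsCirculation Q) (hR : IsCirculation R) :
    IsCirculation (Q - R) := by
  intro v
  simp only [Pi.sub_apply, sum_sub_distrib, hQ v, hR v]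

lemma IsCirculation.smul {Q : α → α → ℝ} (hQ : IsCirculation Q) (a : ℝ) :
    IsCirculation (a • Q) := by
  intro v
  simp only [Pi.smul_apply, smul_eq_mul, ← mul_sum, hQ v]

lemma isCirculation_stationaryFlow {P : Matrix α α ℝ} {π : α → ℝ}
    (hrow : ∀ i, ∑ j, P i j = 1) (hinv : ∀ j, ∑ i, π i * P i j = π j) :
    IsCirculation fun i j => π i * P i j := by
  intro v
  rw [← mul_sum, hrow v, mul_one, hinv v]

noncomputable def posSupport (Q : α → α → ℝ) : Finset (α × α) :=
  univ.filter fun e => 0 < Q e.1 e.2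

end Circulation

lemma Function.exists_iterate_mem_periodicPts {α : Type*} [Finite α] (f : α → α) (x : α) :
    ∃ m, f^[m] x ∈ periodicPts f := by
  obtain ⟨m, n, hne, heq⟩ := Finite.exists_ne_map_eq_of_infinite (f^[·] x)
  wlog hmn : m < n generalizing m n
  · exact this n m hne.symm heq.symm (hne.lt_or_gt.resolve_left hmn)
  refine ⟨m, mk_mem_periodicPts (n := n - m) (by omega) ?_⟩
  rw [IsPeriodicPt, IsFixedPt, ← iterate_add_apply, Nat.sub_add_cancel hmn.le]
  exact heq.symm

namespace MCycle

variable {N : ℕ} (c : MCycle N)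

lemma J_nonneg (i j : Fin N) : 0 ≤ c.J i j := by
  unfold J
  split_ifs <;> norm_num

lemma J_eq_sum (i j : Fin N) :
    c.J i j = ∑ l, if c.f l = i ∧ c.f (l + 1) = j then 1 else 0 := by
  unfold J
  split_ifs with h
  · obtain ⟨l₀, hl₀⟩ := h
    rw [sum_eq_single_of_mem l₀ (mem_univ _) fun l _ hl => if_neg fun h' =>
      hl (c.inj (h'.1.trans hl₀.1.symm)), if_pos hl₀]
  · exact (sum_eq_zero fun l _ => if_neg fun h' => h ⟨l, h'⟩).symm

lemma sum_J_left (v : Fin N) : ∑ j, c.J v j = ∑ l, if c.f l = v then 1 else 0 := by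
  simp only [J_eq_sum, ite_and]
  rw [sum_comm]
  simp

lemma sum_J_right (v : Fin N) : ∑ i, c.J i v = ∑ l, if c.f l = v then 1 else 0 := by
  calc ∑ i, c.J i v = ∑ l, if c.f (l + 1) = v then 1 else 0 := by
        simp only [J_eq_sum, ite_and]
        rw [sum_comm]
        simp
    _ = ∑ l, if c.f l = v then 1 else 0 :=
        Fintype.sum_equiv (Equiv.addRight 1) _ _ fun _ => rfl

lemma isCirculation_J : IsCirculation c.J := fun v => by
  rw [sum_J_left, sum_J_right]

noncomputable def ofPeriodicPt (s : Fin N → Fin N) (p : Fin N) (hp : p ∈ periodicPts s) :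
    MCycle N where
  len := minimalPeriod s p - 1
  f l := s^[l] p
  inj a b hab := by
    have hlen := Nat.sub_add_cancel (minimalPeriod_pos_of_mem_periodicPts hp)
    exact Fin.ext <| iterate_injOn_Iio_minimalPeriod (Set.mem_Iio.2 (by omega))
      (Set.mem_Iio.2 (by omega)) hab

lemma ofPeriodicPt_f_add_one (s : Fin N → Fin N) (p : Fin N) (hp : p ∈ periodicPts s)
    (l : Fin ((ofPeriodicPt s p hp).len + 1)) :
    (ofPeriodicPt s p hp).f (l + 1) = s ((ofPeriodicPt s p hp).f l) := by
  have hlen := Nat.sub_add_cancel (minimalPeriod_pos_of_mem_periodicPts hp)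
  have hval : ((l + 1 : Fin _) : ℕ) = (l + 1) % minimalPeriod s p := by
    rw [Fin.val_add, Fin.val_one', Nat.add_mod_mod]
    exact congrArg _ hlen
  calc (ofPeriodicPt s p hp).f (l + 1) = s^[(l + 1) % minimalPeriod s p] p :=
        congrArg (s^[·] p) hval
    _ = s ((ofPeriodicPt s p hp).f l) := by
        rw [iterate_mod_minimalPeriod_eq, iterate_succ_apply']
        rfl

end MCycle

lemma exists_mcycle_of_mapsTo {N : ℕ} {s : Fin N → Fin N} {S : Set (Fin N)}
    (hs : Set.MapsTo s S S) {x : Fin N} (hx : x ∈ S) :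
    ∃ c : MCycle N, ∀ l, c.f l ∈ S ∧ c.f (l + 1) = s (c.f l) := by
  obtain ⟨m, hm⟩ := exists_iterate_mem_periodicPts s x
  refine ⟨MCycle.ofPeriodicPt s _ hm, fun l => ⟨?_, MCycle.ofPeriodicPt_f_add_one s _ hm l⟩⟩
  show s^[l] (s^[m] x) ∈ S
  rw [← iterate_add_apply]
  exact hs.iterate _ hx

section Decomposition

variable {N : ℕ} {Q : Fin N → Fin N → ℝ}

lemma IsCirculation.exists_mcycle_pos (hcirc : IsCirculation Q) (hQ : 0 ≤ Q) {i₀ j₀ : Fin N}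
    (h₀ : 0 < Q i₀ j₀) : ∃ c : MCycle N, ∀ l, 0 < Q (c.f l) (c.f (l + 1)) := by
  set S : Set (Fin N) := {v | 0 < ∑ j, Q v j}
  -- out-flow of `j` is its in-flow, which is at least `Q v j`
  have step : ∀ v ∈ S, ∃ j, j ∈ S ∧ 0 < Q v j := by
    intro v (hv : 0 < ∑ j, Q v j)
    obtain ⟨j, -, hj⟩ := exists_lt_of_sum_lt (sum_const_zero.trans_lt hv)
    refine ⟨j, ?_, hj⟩
    show 0 < ∑ k, Q j k
    rw [hcirc j]
    exact hj.trans_le (single_le_sum (fun i _ => hQ i j) (mem_univ v))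
  choose! s hsS hs using step
  obtain ⟨c, hc⟩ := exists_mcycle_of_mapsTo hsS
    (h₀.trans_le (single_le_sum (fun j _ => hQ i₀ j) (mem_univ j₀)) : i₀ ∈ S)
  exact ⟨c, fun l => (hc l).2 ▸ hs _ (hc l).1⟩

lemma MCycle.exists_pos_smul_J_le (hQ : 0 ≤ Q) (c : MCycle N)
    (hc : ∀ l, 0 < Q (c.f l) (c.f (l + 1))) :
    ∃ ε : ℝ, 0 < ε ∧ ε • c.J ≤ Q ∧ posSupport (Q - ε • c.J) ⊂ posSupport Q := by
  obtain ⟨l₀, -, hmin⟩ := exists_min_image univ (fun l => Q (c.f l) (c.f (l + 1))) univ_nonempty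
  have hJ₀ : c.J (c.f l₀) (c.f (l₀ + 1)) = 1 := if_pos ⟨l₀, rfl, rfl⟩
  refine ⟨Q (c.f l₀) (c.f (l₀ + 1)), hc l₀, fun i j => ?_, ?_⟩
  · show _ * c.J i j ≤ Q i j
    unfold MCycle.J
    split_ifs with h
    · obtain ⟨l, rfl, rfl⟩ := h
      simpa using hmin l (mem_univ l)
    · simpa using hQ i j
  refine (ssubset_iff_of_subset fun e he => ?_).2 ⟨(c.f l₀, c.f (l₀ + 1)), ?_, ?_⟩
  · simp only [posSupport, mem_filter, mem_univ, true_and, Pi.sub_apply, Pi.smul_apply,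
      smul_eq_mul] at he ⊢
    linarith [mul_nonneg (hc l₀).le (c.J_nonneg e.1 e.2)]
  · simpa [posSupport] using hc l₀
  · simp [posSupport, hJ₀]

theorem IsCirculation.exists_mcycle_decomposition (hcirc : IsCirculation Q) (hQ : 0 ≤ Q) :
    ∃ w : MCycle N →₀ ℝ, 0 ≤ w ∧ Finsupp.linearCombination ℝ MCycle.J w = Q := by
  induction hn : #(posSupport Q) using Nat.strong_induction_on generalizing Q with
  | _ n ih =>
  by_cases hQ₀ : ∃ i j, 0 < Q i j
  · obtain ⟨i₀, j₀, h₀⟩ := hQ₀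
    obtain ⟨c, hc⟩ := hcirc.exists_mcycle_pos hQ h₀
    obtain ⟨ε, hε, hle, hsupp⟩ := c.exists_pos_smul_J_le hQ hc
    obtain ⟨w, hw, hwQ⟩ := ih _ (hn ▸ card_lt_card hsupp) (hcirc.sub (c.isCirculation_J.smul ε))
      (sub_nonneg.2 hle) rfl
    refine ⟨w + Finsupp.single c ε, add_nonneg hw (Finsupp.single_nonneg.2 hε.le), ?_⟩
    rw [map_add, hwQ, Finsupp.linearCombination_single, sub_add_cancel]
  · simp only [not_exists, not_lt] at hQ₀
    exact ⟨0, le_rfl, by ext i j; simp [le_antisymm (hQ₀ i j) (hQ i j)]⟩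

end Decomposition

theorem markov_cycle_decomposition_general
    {N : ℕ} (P : Matrix (Fin N) (Fin N) ℝ) (π : Fin N → ℝ)
    (hnn : ∀ i j, 0 ≤ P i j) (hrow : ∀ i, ∑ j, P i j = 1)
    (hπpos : ∀ i, 0 < π i)
    (hinv : ∀ j, ∑ i, π i * P i j = π j) :
    ∃ (C : Finset (MCycle N)) (w : MCycle N → ℝ),
      (∀ c ∈ C, 0 < w c) ∧
      ∀ i j, π i * P i j = ∑ c ∈ C, w c * c.J i j := by
  obtain ⟨w, hw, hwQ⟩ := (isCirculation_stationaryFlow hrow hinv).exists_mcycle_decomposition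
    fun i j => mul_nonneg (hπpos i).le (hnn i j)
  refine ⟨w.support, w, fun c hc => (hw c).lt_of_ne' (Finsupp.mem_support_iff.1 hc), ?_⟩
  intro i j
  rw [← congrFun₂ hwQ i j, Finsupp.linearCombination_apply, Finsupp.sum]
  simp only [Finset.sum_apply, Pi.smul_apply, smul_eq_mul]

/-- **Cycle decomposition of a stationary Markov chain.**
Let `X` be a stationary Markov chain on the finite state space `Fin N` with transition
matrix `P` and invariant probability distribution `π` (with `π i > 0` for all `i`).
Then there is a finite collection of directed cycles of pairwise distinct states, with a
positive weight for each cycle in the collection, such that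
`π i * P i j = ∑_c w_c J_c(i,j)` for all states `i, j`. -/
theorem markov_cycle_decomposition
    {N : ℕ} (hN : 0 < N) (P : Matrix (Fin N) (Fin N) ℝ) (π : Fin N → ℝ)
    (hnn : ∀ i j, 0 ≤ P i j) (hrow : ∀ i, ∑ j, P i j = 1)
    (hπpos : ∀ i, 0 < π i) (hπ1 : ∑ i, π i = 1)
    (hinv : ∀ j, ∑ i, π i * P i j = π j) :
    ∃ (C : Finset (MCycle N)) (w : MCycle N → ℝ),
      (∀ c ∈ C, 0 < w c) ∧
      ∀ i j, π i * P i j = ∑ c ∈ C, w c * c.J i j :=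
  markov_cycle_decomposition_general P π hnn hrow hπpos hinv
end

section
/- Let P = (p_{ij}) be an irreducible stochastic matrix on a finite state space S = {1, …, N}, set D = I − P, and for a subset H ⊆ S let D(H) denote the determinant of the submatrix of D with rows and columns indexed by H. Then the vector defined by π_j = D({j}ᶜ) / Σ_{k ∈ S} D({k}ᶜ) is the unique invariant probability distribution of P; in particular Σ_{k ∈ S} D({k}ᶜ) > 0 and D({j}ᶜ) ≥ 0 for all j. -/
/-! The diagonal of the adjugate of `D = 1 - P` is `j ↦ D({j}ᶜ)`. Irreducibility gives a maximum
principle, so `P`-harmonic vectors are constant. As `D * adj D = det D • 1 = 0`, the columns of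
`adj D` are harmonic, hence constant: every row of `adj D` is its diagonal, and `adj D * D = 0`
says that the diagonal is invariant. Its entries are positive because `t ↦ adj (1 - t • P) j j`
equals `1` at `t = 0` and, by the maximum principle for the chain killed at `j`, never vanishes
on `[0, 1]`. For uniqueness, replacing a column of `D` by ones gives, by Cramer's rule, a matrix
of determinant `∑ j, D({j}ᶜ) > 0`, and it kills every left null vector of `D` of total mass
zero. -/

/-- `subdet D H` is the determinant of the principal submatrix of `D` with rows and
columns indexed by the subset `H` (with `subdet D ∅ = 1`). -/
noncomputable def subdet {N : ℕ} (D : Matrix (Fin N) (Fin N) ℝ) (H : Finset (Fin N)) : ℝ :=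
  (D.submatrix (fun x : H => (x : Fin N)) (fun x : H => (x : Fin N))).det

open Finset Matrix

namespace Matrix

section LinearAlgebra

variable {ι K : Type*} [Fintype ι] [DecidableEq ι]

theorem one_sub_mulVec_eq_zero_iff [Ring K] {P : Matrix ι ι K} {x : ι → K} :
    (1 - P) *ᵥ x = 0 ↔ P *ᵥ x = x := by
  rw [sub_mulVec, one_mulVec, sub_eq_zero, eq_comm]

theorem vecMul_one_sub_eq_zero_iff [Ring K] {P : Matrix ι ι K} {x : ι → K} :
    x ᵥ* (1 - P) = 0 ↔ x ᵥ* P = x := by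
  rw [vecMul_sub, vecMul_one, sub_eq_zero, eq_comm]

theorem det_updateCol_one_eq_sum_adjugate [CommRing K] (A : Matrix ι ι K) (l : ι) :
    (A.updateCol l 1).det = ∑ i, A.adjugate l i := by
  rw [← cramer_apply, cramer_eq_adjugate_mulVec]
  simp [mulVec, dotProduct]

theorem eq_zero_of_vecMul_eq_zero_of_sum_eq_zero [Field K] {A : Matrix ι ι K} {l : ι}
    (hA : ∑ i, A.adjugate l i ≠ 0) {u : ι → K} (hu : u ᵥ* A = 0) (hsum : ∑ i, u i = 0) :
    u = 0 := by
  by_contra hne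
  refine hA ?_
  rw [← det_updateCol_one_eq_sum_adjugate, ← exists_vecMul_eq_zero_iff]
  refine ⟨u, hne, funext fun k => ?_⟩
  rcases eq_or_ne k l with rfl | hk
  · simpa [vecMul, dotProduct] using hsum
  · simpa [vecMul, dotProduct, updateCol_ne hk] using congrFun hu k

end LinearAlgebra

theorem IsIrreducible.mem_of_forall_pos_mem {ι R : Type*} [Ring R] [LinearOrder R]
    {P : Matrix ι ι R} (hirr : P.IsIrreducible) {S : Set ι}
    (hS : ∀ i ∈ S, ∀ k, 0 < P i k → k ∈ S) {i : ι} (hi : i ∈ S) (k : ι) : k ∈ S := by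
  let := toQuiver P
  obtain ⟨p, -⟩ := hirr.connected i k
  induction p with
  | nil => exact hi
  | cons _ e ih => exact hS _ ih _ e.down

section Stochastic

variable {ι R : Type*} [Fintype ι] [DecidableEq ι] [Field R] [LinearOrder R]
  [IsStrictOrderedRing R] {P : Matrix ι ι R}

theorem IsIrreducible.eq_of_le_of_le_mulVec (hP : P ∈ rowStochastic R ι)
    (hirr : P.IsIrreducible) {x : ι → R} {m : R} (hle : ∀ i, x i ≤ m)
    (hsub : ∀ i, x i = m → m ≤ (P *ᵥ x) i) {i : ι} (hi : x i = m) (k : ι) : x k = m := by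
  refine hirr.mem_of_forall_pos_mem (S := {i | x i = m}) (fun i hi k hk => ?_) hi k
  by_contra hne
  have hlt : (P *ᵥ x) i < m := calc
    (P *ᵥ x) i = ∑ l, P i l * x l := rfl
    _ < ∑ l, P i l * m :=
      sum_lt_sum (fun l _ => mul_le_mul_of_nonneg_left (hle l) (nonneg_of_mem_rowStochastic hP))
        ⟨k, mem_univ k, mul_lt_mul_of_pos_left (lt_of_le_of_ne (hle k) hne) hk⟩
    _ = m := by rw [← sum_mul, sum_row_of_mem_rowStochastic hP, one_mul]
  exact (hsub i hi).not_gt hlt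

theorem IsIrreducible.eq_of_mulVec_eq (hP : P ∈ rowStochastic R ι) (hirr : P.IsIrreducible)
    {x : ι → R} (hx : P *ᵥ x = x) (i k : ι) : x i = x k := by
  have : Nonempty ι := ⟨i⟩
  obtain ⟨i₀, hi₀⟩ := Finite.exists_max x
  have hconst := hirr.eq_of_le_of_le_mulVec hP hi₀ (fun l hl => by rw [hx]; exact hl.ge) rfl
  rw [hconst i, hconst k]

theorem IsIrreducible.nonpos_of_eq_smul_mulVec (hP : P ∈ rowStochastic R ι)
    (hirr : P.IsIrreducible) {t : R} (ht₀ : 0 ≤ t) (ht₁ : t ≤ 1) {y : ι → R} {j : ι}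
    (hj : y j = 0) (hy : ∀ i ≠ j, y i = t * (P *ᵥ y) i) (i : ι) : y i ≤ 0 := by
  have : Nonempty ι := ⟨j⟩
  obtain ⟨i₀, hi₀⟩ := Finite.exists_max y
  by_contra! hpos
  have hm : 0 < y i₀ := hpos.trans_le (hi₀ i)
  have hsub (l : ι) (hl : y l = y i₀) : y i₀ ≤ (P *ᵥ y) l := by
    have hlj : l ≠ j := by rintro rfl; linarith
    have hyl := hy l hlj
    have hs : 0 < (P *ᵥ y) l := by
      by_contra! hs
      nlinarith [mul_nonpos_of_nonneg_of_nonpos ht₀ hs]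
    nlinarith [mul_le_mul_of_nonneg_right ht₁ hs.le]
  have := hirr.eq_of_le_of_le_mulVec hP hi₀ hsub rfl j
  linarith

theorem det_one_sub_eq_zero [Nonempty ι] (hP : P ∈ rowStochastic R ι) : (1 - P).det = 0 :=
  exists_mulVec_eq_zero_iff.1
    ⟨1, one_ne_zero, one_sub_mulVec_eq_zero_iff.2 (one_vecMul_of_mem_rowStochastic hP)⟩

theorem IsIrreducible.adjugate_one_sub_apply_eq (hP : P ∈ rowStochastic R ι)
    (hirr : P.IsIrreducible) (i k l : ι) : (1 - P).adjugate i l = (1 - P).adjugate k l := by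
  have : Nonempty ι := ⟨i⟩
  refine hirr.eq_of_mulVec_eq hP (x := fun m => (1 - P).adjugate m l)
    (one_sub_mulVec_eq_zero_iff.1 (funext fun m => ?_)) i k
  have hcol := congrFun (congrFun (mul_adjugate (1 - P)) m) l
  rw [det_one_sub_eq_zero hP, zero_smul] at hcol
  exact hcol

theorem IsIrreducible.diag_adjugate_vecMul_eq (hP : P ∈ rowStochastic R ι)
    (hirr : P.IsIrreducible) : (1 - P).adjugate.diag ᵥ* P = (1 - P).adjugate.diag := by
  refine vecMul_one_sub_eq_zero_iff.1 (funext fun l => ?_)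
  have : Nonempty ι := ⟨l⟩
  calc ((1 - P).adjugate.diag ᵥ* (1 - P)) l = ((1 - P).adjugate * (1 - P)) l l := by
        simp only [vecMul, dotProduct, mul_apply, diag,
          hirr.adjugate_one_sub_apply_eq hP _ l]
    _ = 0 := by simp [adjugate_mul, det_one_sub_eq_zero hP]

end Stochastic

section Real

variable {ι : Type*} [Fintype ι] [DecidableEq ι] {P : Matrix ι ι ℝ}

theorem IsIrreducible.det_updateRow_one_sub_smul_ne_zero (hP : P ∈ rowStochastic ℝ ι)
    (hirr : P.IsIrreducible) {t : ℝ} (ht₀ : 0 ≤ t) (ht₁ : t ≤ 1) (j : ι) :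
    ((1 - t • P).updateRow j (Pi.single j 1)).det ≠ 0 := by
  intro hdet
  obtain ⟨y, hy0, hy⟩ := exists_mulVec_eq_zero_iff.2 hdet
  have hrow (i : ι) : ((1 - t • P).updateRow j (Pi.single j 1) *ᵥ y) i =
      (1 - t • P).updateRow j (Pi.single j 1) i ⬝ᵥ y := rfl
  have hyj : y j = 0 := by
    simpa only [hrow, updateRow_self, single_one_dotProduct, Pi.zero_apply] using congrFun hy j
  have hyi (i : ι) (hi : i ≠ j) : y i = t * (P *ᵥ y) i := by
    have := congrFun hy i
    rw [hrow, updateRow_ne hi, ← mulVec, sub_mulVec, one_mulVec, smul_mulVec] at this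
    simpa [sub_eq_zero] using this
  have hle := hirr.nonpos_of_eq_smul_mulVec hP ht₀ ht₁ hyj hyi
  have hge := hirr.nonpos_of_eq_smul_mulVec hP ht₀ ht₁ (y := -y) (j := j) (by simp [hyj])
    (fun i hi => by simp [hyi i hi, mulVec_neg])
  exact hy0 (funext fun i => le_antisymm (hle i) (by simpa using hge i))

theorem IsIrreducible.adjugate_one_sub_apply_self_pos (hP : P ∈ rowStochastic ℝ ι)
    (hirr : P.IsIrreducible) (j : ι) : 0 < (1 - P).adjugate j j := by
  set f : ℝ → ℝ := fun t => ((1 - t • P).updateRow j (Pi.single j 1)).det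
  have hf : Continuous f := by fun_prop
  have hf₀ : f 0 = 1 := by
    have h1 : (1 : Matrix ι ι ℝ) j = Pi.single j 1 := funext fun k => one_eq_pi_single
    simp [f, ← h1]
  have hf₁ : f 1 = (1 - P).adjugate j j := by simp [f, adjugate_apply]
  rw [← hf₁]
  by_contra! hneg
  obtain ⟨t, ⟨ht₀, ht₁⟩, hft⟩ := intermediate_value_Icc' zero_le_one hf.continuousOn
    ⟨hneg, hf₀ ▸ zero_le_one⟩
  exact hirr.det_updateRow_one_sub_smul_ne_zero hP ht₀ ht₁ j hft

end Real

end Matrix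

theorem diag_adjugate_eq_subdet {N : ℕ} (A : Matrix (Fin N) (Fin N) ℝ) (j : Fin N) :
    A.adjugate.diag j = subdet A {j}ᶜ := by
  obtain _ | n := N
  · exact j.elim0
  let e : Fin n ≃ ({j}ᶜ : Finset (Fin (n + 1))) :=
    (finSuccAboveEquiv j).trans (Equiv.subtypeEquivRight (by simp))
  rw [Matrix.diag_apply, Matrix.adjugate_fin_succ_eq_det_submatrix,
    (Even.add_self (j : ℕ)).neg_one_pow, one_mul, subdet, ← Matrix.det_submatrix_equiv_self e]
  rfl

/-- **Determinant formula for the invariant distribution.**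
Let `P` be an irreducible stochastic matrix on the finite state space `Fin N` and set
`D = 1 − P`.  Then `π j = D({j}ᶜ) / ∑_k D({k}ᶜ)` defines the unique invariant
probability distribution of `P`; in particular `∑_k D({k}ᶜ) > 0` and each
`D({j}ᶜ) ≥ 0`. -/
theorem invariant_distribution_determinant_formula
    {N : ℕ} (hN : 0 < N) (P : Matrix (Fin N) (Fin N) ℝ)
    (hnn : ∀ i j, 0 ≤ P i j) (hrow : ∀ i, ∑ j, P i j = 1)
    (hirr : ∀ i j, ∃ n, 1 ≤ n ∧ 0 < (P ^ n) i j) :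
    0 < (∑ k, subdet (1 - P) ({k}ᶜ)) ∧
    (∀ j, 0 ≤ subdet (1 - P) ({j}ᶜ)) ∧
    (∀ j, 0 ≤ subdet (1 - P) ({j}ᶜ) / ∑ k, subdet (1 - P) ({k}ᶜ)) ∧
    (∑ j, subdet (1 - P) ({j}ᶜ) / ∑ k, subdet (1 - P) ({k}ᶜ)) = 1 ∧
    (∀ j, ∑ i, (subdet (1 - P) ({i}ᶜ) / ∑ k, subdet (1 - P) ({k}ᶜ)) * P i j
        = subdet (1 - P) ({j}ᶜ) / ∑ k, subdet (1 - P) ({k}ᶜ)) ∧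
    (∀ ρ : Fin N → ℝ, (∀ j, 0 ≤ ρ j) → (∑ j, ρ j = 1) →
      (∀ j, ∑ i, ρ i * P i j = ρ j) →
      ∀ j, ρ j = subdet (1 - P) ({j}ᶜ) / ∑ k, subdet (1 - P) ({k}ᶜ)) := by
  have hP : P ∈ rowStochastic ℝ (Fin N) := mem_rowStochastic_iff_sum.2 ⟨hnn, hrow⟩
  have hirred : P.IsIrreducible := (isIrreducible_iff_exists_pow_pos hnn).2 hirr
  have : Nonempty (Fin N) := ⟨⟨0, hN⟩⟩
  simp only [← diag_adjugate_eq_subdet]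
  set v := (1 - P).adjugate.diag
  set T := ∑ k, v k
  set π : Fin N → ℝ := fun i => v i / T
  have hv (j : Fin N) : 0 < v j := hirred.adjugate_one_sub_apply_self_pos hP j
  have hT : 0 < T := sum_pos (fun k _ => hv k) univ_nonempty
  have hπP : π ᵥ* P = π := by
    rw [show π = T⁻¹ • v from funext fun i => div_eq_inv_mul _ _, smul_vecMul,
      hirred.diag_adjugate_vecMul_eq hP]
  have hπsum : ∑ i, π i = 1 := by rw [← sum_div, div_self hT.ne']
  refine ⟨hT, fun j => (hv j).le, fun j => div_nonneg (hv j).le hT.le, hπsum, congrFun hπP,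
    fun ρ _ hρ hρP j => ?_⟩
  have hsum : ∑ i, (ρ - π) i = 0 := by
    simp only [Pi.sub_apply, sum_sub_distrib, hρ, hπsum, sub_self]
  have hadj : ∑ i, (1 - P).adjugate j i ≠ 0 := by
    rw [sum_congr rfl fun i _ => hirred.adjugate_one_sub_apply_eq hP j i i]
    exact hT.ne'
  have hker : (ρ - π) ᵥ* (1 - P) = 0 := by
    rw [vecMul_one_sub_eq_zero_iff, sub_vecMul, hπP, show ρ ᵥ* P = ρ from funext hρP]
  exact congrFun (sub_eq_zero.1 (eq_zero_of_vecMul_eq_zero_of_sum_eq_zero hadj hker hsum)) j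
end

section
/- Fix N ≥ 1, a real matrix T = (T_{ij})_{1≤i,j≤N}, thresholds U_1, …, U_N ∈ ℝ, and β > 0. Let p_{ση} = ∏_{i=1}^N exp(β η_i h_i(σ)) / (exp(β h_i(σ)) + exp(−β h_i(σ))) on {−1,1}^N, where h_i(σ) = Σ_{j=1}^N T_{ij} σ_j − U_i. Then for any three states α, σ, η ∈ {−1,1}^N: (p_{ασ} p_{ση} p_{ηα}) / (p_{αη} p_{ησ} p_{σα}) = exp( −β Σ_{i,j} (T_{ij} − T_{ji}) (α_i σ_j + σ_i η_j + η_i α_j) ). -/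
/-- The local field `h_i(σ) = ∑_j T_{ij} σ_j − U_i` of the Boltzmann machine. -/
def localField {N : ℕ} (T : Fin N → Fin N → ℝ) (U : Fin N → ℝ)
    (σ : Fin N → ℝ) (i : Fin N) : ℝ :=
  ∑ j, T i j * σ j - U i

/-- The synchronous Boltzmann-machine transition probability at inverse temperature `β`:
`p_{ση} = ∏_i exp(β η_i h_i(σ)) / (exp(β h_i(σ)) + exp(−β h_i(σ)))`. -/
noncomputable def bmP {N : ℕ} (T : Fin N → Fin N → ℝ) (U : Fin N → ℝ) (β : ℝ)
    (σ η : Fin N → ℝ) : ℝ :=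
  ∏ i, Real.exp (β * η i * localField T U σ i) /
    (Real.exp (β * localField T U σ i) + Real.exp (-(β * localField T U σ i)))

/-!
Each factor `p_{ση}` is `exp(β ∑_i η_i h_i(σ)) / Z(σ)` with a normalizer `Z(σ)` depending only on
the source state. Around the cycle `α → σ → η → α` and its reverse every state is a source exactly
once, so the normalizers cancel, and so do the threshold terms `∑_i η_i U_i`. What remains is the
bilinear part `∑_{ij} T_{ij} η_i σ_j` summed around the cycle minus its reverse, which only sees
the antisymmetric part `T − Tᵀ`.
-/

open Finset Real

theorem Finset.sum_sum_sub_transpose_mul {ι R : Type*} [Fintype ι] [CommRing R]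
    (T x : ι → ι → R) :
    ∑ i, ∑ j, (T i j - T j i) * x i j = ∑ i, ∑ j, T i j * (x i j - x j i) := by
  simp only [sub_mul, mul_sub, sum_sub_distrib]
  rw [sum_comm (f := fun i j => T j i * x i j)]

theorem exp_div_cycle_ratio {X : Type*} (S : X → X → ℝ) (Z : X → ℝ) (hZ : ∀ a, Z a ≠ 0)
    (a b c : X) :
    (exp (S a b) / Z a * (exp (S b c) / Z b) * (exp (S c a) / Z c)) /
      (exp (S a c) / Z a * (exp (S c b) / Z c) * (exp (S b a) / Z b))
    = exp (S a b + S b c + S c a - (S a c + S c b + S b a)) := by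
  have := hZ a; have := hZ b; have := hZ c
  simp only [exp_sub, exp_add]
  field_simp

namespace BoltzmannMachine

variable {N : ℕ} (T : Fin N → Fin N → ℝ) (U : Fin N → ℝ) (β : ℝ)

noncomputable def normalizer (σ : Fin N → ℝ) : ℝ :=
  ∏ i, (exp (β * localField T U σ i) + exp (-(β * localField T U σ i)))

theorem normalizer_pos (σ : Fin N → ℝ) : 0 < normalizer T U β σ :=
  prod_pos fun _ _ => by positivity

noncomputable def exponent (σ η : Fin N → ℝ) : ℝ :=
  β * ∑ i, η i * localField T U σ i

theorem bmP_eq_exp_exponent_div_normalizer (σ η : Fin N → ℝ) :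
    bmP T U β σ η = exp (exponent T U β σ η) / normalizer T U β σ := by
  rw [bmP, exponent, normalizer, prod_div_distrib, ← exp_sum, mul_sum]
  simp only [mul_assoc]

theorem sum_mul_localField (σ η : Fin N → ℝ) :
    ∑ i, η i * localField T U σ i = ∑ i, ∑ j, T i j * (η i * σ j) - ∑ i, η i * U i := by
  simp only [localField, mul_sub, mul_sum, sum_sub_distrib]
  congr 1
  exact sum_congr rfl fun i _ => sum_congr rfl fun j _ => by ring

theorem exponent_cycle_sub_reverse (α σ η : Fin N → ℝ) :
    exponent T U β α σ + exponent T U β σ η + exponent T U β η α -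
        (exponent T U β α η + exponent T U β η σ + exponent T U β σ α)
      = -β * ∑ i, ∑ j, (T i j - T j i) * (α i * σ j + σ i * η j + η i * α j) := by
  simp only [exponent, sum_mul_localField, sum_sum_sub_transpose_mul, mul_sub, mul_add,
    sum_sub_distrib, sum_add_distrib,
    -- orient every product of two state coordinates alike, so that `ring` sees equal atoms
    mul_comm (α _) (σ _), mul_comm (σ _) (η _), mul_comm (η _) (α _)]
  ring

end BoltzmannMachine

theorem bmP_triangle_ratio_general
    {N : ℕ} (T : Fin N → Fin N → ℝ) (U : Fin N → ℝ)
    (β : ℝ) (α σ η : Fin N → ℝ) :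
    (bmP T U β α σ * bmP T U β σ η * bmP T U β η α) /
      (bmP T U β α η * bmP T U β η σ * bmP T U β σ α)
    = Real.exp (-β * ∑ i, ∑ j,
        (T i j - T j i) * (α i * σ j + σ i * η j + η i * α j)) := by
  simp only [BoltzmannMachine.bmP_eq_exp_exponent_div_normalizer]
  rw [exp_div_cycle_ratio _ _ fun a => (BoltzmannMachine.normalizer_pos T U β a).ne',
    BoltzmannMachine.exponent_cycle_sub_reverse]

/-- **Triangle-cycle ratio for the synchronous Boltzmann machine.**
For any three states `α, σ, η ∈ {−1,1}^N`,
`(p_{ασ} p_{ση} p_{ηα}) / (p_{αη} p_{ησ} p_{σα})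
  = exp(−β ∑_{i,j} (T_{ij} − T_{ji})(α_i σ_j + σ_i η_j + η_i α_j))`. -/
theorem bmP_triangle_ratio
    {N : ℕ} (hN : 1 ≤ N) (T : Fin N → Fin N → ℝ) (U : Fin N → ℝ)
    (β : ℝ) (hβ : 0 < β) (α σ η : Fin N → ℝ)
    (hα : ∀ i, α i = 1 ∨ α i = -1)
    (hσ : ∀ i, σ i = 1 ∨ σ i = -1)
    (hη : ∀ i, η i = 1 ∨ η i = -1) :
    (bmP T U β α σ * bmP T U β σ η * bmP T U β η α) /
      (bmP T U β α η * bmP T U β η σ * bmP T U β σ α)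
    = Real.exp (-β * ∑ i, ∑ j,
        (T i j - T j i) * (α i * σ j + σ i * η j + η i * α j)) :=
  bmP_triangle_ratio_general T U β α σ η
end

section
/- Fix N ≥ 1, a real matrix T = (T_{ij})_{1≤i,j≤N}, thresholds U_1, …, U_N ∈ ℝ, and β > 0. Let p_{ση} = ∏_{i=1}^N exp(β η_i h_i(σ)) / (exp(β h_i(σ)) + exp(−β h_i(σ))) on {−1,1}^N, where h_i(σ) = Σ_{j=1}^N T_{ij} σ_j − U_i. Then the transition matrix (p_{ση}) satisfies the Kolmogorov cyclic condition — i.e., for every finite sequence of states σ^(1), …, σ^(s) in {−1,1}^N, p_{σ^(1)σ^(2)} p_{σ^(2)σ^(3)} ⋯ p_{σ^(s)σ^(1)} = p_{σ^(1)σ^(s)} p_{σ^(s)σ^(s-1)} ⋯ p_{σ^(2)σ^(1)} — if and only if T is symmetric (T_{ij} = T_{ji} for all i, j). Equivalently, the stationary Markov chain with this transition matrix is reversible if and only if T is symmetric. -/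
open Finset Matrix

theorem LinearMap.BilinForm.triangle_sum_sub_reverse {R M : Type*} [CommRing R]
    [AddCommGroup M] [Module R M] (B : LinearMap.BilinForm R M) (u v w : M) :
    (B v u + B w v + B u w) - (B u v + B v w + B w u) =
      B (w - v) (v - u) - B (v - u) (w - v) := by
  simp only [map_sub, LinearMap.sub_apply]
  ring

theorem Matrix.toBilin'_single_single {ι R : Type*} [Fintype ι] [DecidableEq ι] [CommRing R]
    (M : Matrix ι ι R) (i j : ι) (a b : R) :
    M.toBilin' (Pi.single i a) (Pi.single j b) = a * M i j * b := by
  simp [Matrix.toBilin'_apply', mulVec_single, mul_comm]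

theorem prod_cycle_exp_div_eq_iff {α : Type*} {s : ℕ} (E : α → α → ℝ) (Z : α → ℝ)
    (hZ : ∀ a, Z a ≠ 0) (f : Fin (s + 1) → α) :
    ∏ l, Real.exp (E (f l) (f (l + 1))) / Z (f l) =
        ∏ l, Real.exp (E (f (l + 1)) (f l)) / Z (f (l + 1)) ↔
      ∑ l, E (f l) (f (l + 1)) = ∑ l, E (f (l + 1)) (f l) := by
  have hshift : ∏ l, Z (f (l + 1)) = ∏ l, Z (f l) :=
    Equiv.prod_comp (Equiv.addRight 1) (Z ∘ f)
  rw [prod_div_distrib, prod_div_distrib, ← Real.exp_sum, ← Real.exp_sum, hshift,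
    div_left_inj' (prod_ne_zero_iff.mpr fun l _ => hZ (f l)), Real.exp_eq_exp]

noncomputable def bmPartition {N : ℕ} (T : Fin N → Fin N → ℝ) (U : Fin N → ℝ) (β : ℝ)
    (σ : Fin N → ℝ) : ℝ :=
  ∏ i, (Real.exp (β * localField T U σ i) + Real.exp (-(β * localField T U σ i)))

theorem bmPartition_pos {N : ℕ} (T : Fin N → Fin N → ℝ) (U : Fin N → ℝ) (β : ℝ)
    (σ : Fin N → ℝ) : 0 < bmPartition T U β σ :=
  prod_pos fun _ _ => by positivity

theorem bmP_eq_exp_div {N : ℕ} (T : Fin N → Fin N → ℝ) (U : Fin N → ℝ) (β : ℝ)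
    (σ η : Fin N → ℝ) :
    bmP T U β σ η =
      Real.exp (β * ((Matrix.of T).toBilin' η σ - η ⬝ᵥ U)) / bmPartition T U β σ := by
  rw [bmP, bmPartition, prod_div_distrib, ← Real.exp_sum, Matrix.toBilin'_apply']
  congr 2
  simp only [localField, dotProduct, mulVec, of_apply, mul_sub, mul_sum, sum_sub_distrib,
    mul_assoc]

theorem bmP_cycle_iff {N : ℕ} (T : Fin N → Fin N → ℝ) (U : Fin N → ℝ) {β : ℝ} (hβ : β ≠ 0)
    {s : ℕ} (f : Fin (s + 1) → Fin N → ℝ) :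
    ∏ l, bmP T U β (f l) (f (l + 1)) = ∏ l, bmP T U β (f (l + 1)) (f l) ↔
      ∑ l, (Matrix.of T).toBilin' (f (l + 1)) (f l) =
        ∑ l, (Matrix.of T).toBilin' (f l) (f (l + 1)) := by
  have hU : ∑ l, f (l + 1) ⬝ᵥ U = ∑ l, f l ⬝ᵥ U :=
    Equiv.sum_comp (Equiv.addRight 1) fun l => f l ⬝ᵥ U
  simp only [bmP_eq_exp_div]
  refine (prod_cycle_exp_div_eq_iff (fun σ η => β * ((Matrix.of T).toBilin' η σ - η ⬝ᵥ U))
    _ (fun σ => (bmPartition_pos T U β σ).ne') f).trans ?_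
  rw [← mul_sum, ← mul_sum, mul_right_inj' hβ, sum_sub_distrib, sum_sub_distrib, hU,
    sub_left_inj]

theorem Matrix.toBilin'_triangle_sum_sub_reverse {ι R : Type*} [Fintype ι] [DecidableEq ι]
    [CommRing R]
    (M : Matrix ι ι R) (f : Fin 3 → ι → R) (i j : ι) (a b : R)
    (hf₁ : f 1 = f 0 + Pi.single i a) (hf₂ : f 2 = f 1 + Pi.single j b) :
    ∑ l, M.toBilin' (f (l + 1)) (f l) - ∑ l, M.toBilin' (f l) (f (l + 1)) =
      b * a * (M j i - M i j) := by
  have hstep₁ : f 1 - f 0 = Pi.single i a := by rw [hf₁, add_sub_cancel_left]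
  have hstep₂ : f 2 - f 1 = Pi.single j b := by rw [hf₂, add_sub_cancel_left]
  simp only [Fin.sum_univ_three]
  rw [show (0 + 1 : Fin 3) = 1 from rfl, show (1 + 1 : Fin 3) = 2 from rfl,
    show (2 + 1 : Fin 3) = 0 from rfl, LinearMap.BilinForm.triangle_sum_sub_reverse, hstep₁,
    hstep₂, toBilin'_single_single, toBilin'_single_single]
  ring

theorem add_single_neg_two_eq_one_or_eq_neg_one {ι : Type*} [DecidableEq ι] {σ : ι → ℝ}
    (hσ : ∀ k, σ k = 1 ∨ σ k = -1) {i : ι} (hi : σ i = 1) (k : ι) :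
    (σ + Pi.single i (-2) : ι → ℝ) k = 1 ∨ (σ + Pi.single i (-2) : ι → ℝ) k = -1 := by
  rcases eq_or_ne k i with rfl | hk
  · right
    rw [Pi.add_apply, Pi.single_eq_same, hi]
    norm_num
  · rw [Pi.add_apply, Pi.single_eq_of_ne hk, add_zero]
    exact hσ k

theorem bmP_kolmogorov_iff_symmetric_general
    {N : ℕ} (T : Fin N → Fin N → ℝ) (U : Fin N → ℝ)
    (β : ℝ) (hβ : 0 < β) :
    (∀ (s : ℕ) (f : Fin (s + 1) → Fin N → ℝ),
      (∀ l i, f l i = 1 ∨ f l i = -1) →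
      ∏ l, bmP T U β (f l) (f (l + 1)) = ∏ l, bmP T U β (f (l + 1)) (f l)) ↔
    (∀ i j, T i j = T j i) := by
  simp only [bmP_cycle_iff T U hβ.ne']
  constructor
  · intro hcycle i j
    rcases eq_or_ne i j with rfl | hij
    · rfl
    let f : Fin 3 → Fin N → ℝ :=
      ![1, 1 + Pi.single i (-2), 1 + Pi.single i (-2) + Pi.single j (-2)]
    have hspin : ∀ l k, f l k = 1 ∨ f l k = -1 := by
      have h₀ : ∀ k, f 0 k = 1 ∨ f 0 k = -1 := fun _ => Or.inl rfl
      have h₁ : ∀ k, f 1 k = 1 ∨ f 1 k = -1 := add_single_neg_two_eq_one_or_eq_neg_one h₀ rfl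
      have h₂ : ∀ k, f 2 k = 1 ∨ f 2 k = -1 :=
        add_single_neg_two_eq_one_or_eq_neg_one h₁ (by simp [f, Pi.single_eq_of_ne hij.symm])
      intro l
      fin_cases l
      exacts [h₀, h₁, h₂]
    have hcirc := Matrix.toBilin'_triangle_sum_sub_reverse (Matrix.of T) f i j (-2) (-2) rfl rfl
    rw [hcycle 2 f hspin, sub_self, of_apply, of_apply] at hcirc
    linarith
  · intro hsymm s f _
    have hB : (Matrix.of T).toBilin'.IsSymm :=
      Matrix.isSymm_toBilin'_iff_isSymm.mpr (IsSymm.ext fun i j => hsymm j i)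
    exact sum_congr rfl fun l _ => hB.eq (f (l + 1)) (f l)

/-- **The synchronous Boltzmann machine is reversible iff `T` is symmetric.**
The transition matrix `(p_{ση})` on `{−1,1}^N` satisfies the Kolmogorov cyclic
condition — for every finite cycle of states `σ^(1), …, σ^(s)` in `{−1,1}^N` the
product of transition probabilities around the cycle equals the product around the
reversed cycle — if and only if `T_{ij} = T_{ji}` for all `i, j`.  (Since all transition
probabilities are strictly positive, the chain is irreducible and this is equivalent to
reversibility of the stationary chain.) -/
theorem bmP_kolmogorov_iff_symmetric
    {N : ℕ} (hN : 1 ≤ N) (T : Fin N → Fin N → ℝ) (U : Fin N → ℝ)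
    (β : ℝ) (hβ : 0 < β) :
    (∀ (s : ℕ) (f : Fin (s + 1) → Fin N → ℝ),
      (∀ l i, f l i = 1 ∨ f l i = -1) →
      ∏ l, bmP T U β (f l) (f (l + 1)) = ∏ l, bmP T U β (f (l + 1)) (f l)) ↔
    (∀ i j, T i j = T j i) :=
  bmP_kolmogorov_iff_symmetric_general T U β hβ
end

section
/- Fix N ≥ 1, a symmetric real matrix T = (T_{ij})_{1≤i,j≤N} (T_{ij} = T_{ji} for all i, j), and thresholds U_1, …, U_N ∈ ℝ. Consider the deterministic synchronous McCulloch–Pitts dynamics on {−1,1}^N: F(σ)_i = sign(h_i(σ)), where h_i(σ) = Σ_{j=1}^N T_{ij} σ_j − U_i, defined at states σ where h_i(σ) ≠ 0 for all i. Then there is no periodic orbit of length s ≥ 3: there do not exist pairwise distinct states σ^(1), …, σ^(s) ∈ {−1,1}^N with s ≥ 3 such that h_i(σ^(k)) ≠ 0 for all i and k, and F(σ^(k)) = σ^(k+1) for 1 ≤ k ≤ s−1 and F(σ^(s)) = σ^(1). -/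
/-!
The synchronous dynamics of a symmetric network has the two-step Lyapunov function
`E(σ, τ) = U ⬝ᵥ (σ + τ) - τ ⬝ᵥ T σ`, evaluated on consecutive states. Along a step
`ρ → σ → τ` it drops by `(τ - ρ) ⬝ᵥ (T σ - U)`, a sum of terms `(τ_i - ρ_i) h_i(σ)` that are
nonnegative because `τ_i` is the sign of `h_i(σ)`, and vanish only when `τ_i = ρ_i` since
`h_i(σ) ≠ 0`. Around a cycle the drops sum to zero, so every state equals the one two steps
later, and an orbit of length at least three cannot consist of distinct states.
-/

open Matrix

section SymmetricNetwork

variable {ι : Type*} [Fintype ι]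

def IsSyncStep (T : Matrix ι ι ℝ) (U σ τ : ι → ℝ) : Prop :=
  ∀ i, τ i = if 0 < (T *ᵥ σ - U) i then 1 else -1

lemma IsSyncStep.eq_one_or_eq_neg_one {T : Matrix ι ι ℝ} {U σ τ : ι → ℝ}
    (hστ : IsSyncStep T U σ τ) (i : ι) : τ i = 1 ∨ τ i = -1 := by
  rw [hστ i]
  split_ifs <;> simp

lemma IsSyncStep.mul_field_nonneg {T : Matrix ι ι ℝ} {U σ τ ρ : ι → ℝ}
    (hστ : IsSyncStep T U σ τ) (hρ : ∀ i, ρ i = 1 ∨ ρ i = -1) (i : ι) :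
    0 ≤ (τ i - ρ i) * (T *ᵥ σ - U) i := by
  rw [hστ i]
  split_ifs <;> rcases hρ i with h | h <;> rw [h] <;> nlinarith

lemma dotProduct_mulVec_comm_of_isSymm {T : Matrix ι ι ℝ} (hT : T.IsSymm) (σ ρ : ι → ℝ) :
    σ ⬝ᵥ T *ᵥ ρ = ρ ⬝ᵥ T *ᵥ σ := by
  rw [dotProduct_mulVec, dotProduct_comm, ← vecMul_transpose, hT.eq]

def pairEnergy (T : Matrix ι ι ℝ) (U σ τ : ι → ℝ) : ℝ :=
  U ⬝ᵥ (σ + τ) - τ ⬝ᵥ T *ᵥ σ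

lemma pairEnergy_sub_pairEnergy {T : Matrix ι ι ℝ} (hT : T.IsSymm) (U ρ σ τ : ι → ℝ) :
    pairEnergy T U ρ σ - pairEnergy T U σ τ = (τ - ρ) ⬝ᵥ (T *ᵥ σ - U) := by
  simp only [pairEnergy, dotProduct_add, sub_dotProduct, dotProduct_sub,
    dotProduct_comm _ U, dotProduct_mulVec_comm_of_isSymm hT σ ρ]
  ring

lemma IsSyncStep.pairEnergy_sub_nonneg {T : Matrix ι ι ℝ} (hT : T.IsSymm) {U ρ σ τ : ι → ℝ}
    (hρ : ∀ i, ρ i = 1 ∨ ρ i = -1) (hστ : IsSyncStep T U σ τ) :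
    0 ≤ pairEnergy T U ρ σ - pairEnergy T U σ τ := by
  rw [pairEnergy_sub_pairEnergy hT]
  exact Finset.sum_nonneg fun i _ => hστ.mul_field_nonneg hρ i

lemma IsSyncStep.eq_of_pairEnergy_sub_eq_zero {T : Matrix ι ι ℝ} (hT : T.IsSymm)
    {U ρ σ τ : ι → ℝ} (hρ : ∀ i, ρ i = 1 ∨ ρ i = -1) (hστ : IsSyncStep T U σ τ)
    (hσ : ∀ i, (T *ᵥ σ - U) i ≠ 0)
    (hE : pairEnergy T U ρ σ - pairEnergy T U σ τ = 0) : τ = ρ := by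
  rw [pairEnergy_sub_pairEnergy hT] at hE
  have hterms := (Finset.sum_eq_zero_iff_of_nonneg fun i _ => hστ.mul_field_nonneg hρ i).mp hE
  funext i
  have := (mul_eq_zero.mp (hterms i (Finset.mem_univ i))).resolve_right (hσ i)
  linarith

theorem IsSyncStep.orbit_add_eq_sub {G : Type*} [AddCommGroup G] [Fintype G]
    {T : Matrix ι ι ℝ} (hT : T.IsSymm) {U : ι → ℝ} {f : G → ι → ℝ} {a : G}
    (hstep : ∀ k, IsSyncStep T U (f k) (f (k + a))) (hfield : ∀ k i, (T *ᵥ f k - U) i ≠ 0)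
    (k : G) : f (k + a) = f (k - a) := by
  have hpm : ∀ k i, f k i = 1 ∨ f k i = -1 := fun k => by
    simpa using (hstep (k - a)).eq_one_or_eq_neg_one
  set E : G → ℝ := fun k => pairEnergy T U (f k) (f (k + a))
  have hprev : ∀ k, E (k - a) = pairEnergy T U (f (k - a)) (f k) := fun k => by
    simp only [E, sub_add_cancel]
  have htelescope : ∑ k, (E (k - a) - E k) = 0 := by
    rw [Finset.sum_sub_distrib, sub_eq_zero]
    exact (Equiv.subRight a).sum_comp E
  have hdrop_nonneg : ∀ k, 0 ≤ E (k - a) - E k := fun k => by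
    rw [hprev]
    exact (hstep k).pairEnergy_sub_nonneg hT (hpm (k - a))
  have hdrop_zero := congrFun ((Fintype.sum_eq_zero_iff_of_nonneg hdrop_nonneg).mp htelescope) k
  rw [Pi.zero_apply, hprev] at hdrop_zero
  exact (hstep k).eq_of_pairEnergy_sub_eq_zero hT (hpm (k - a)) (hfield k) hdrop_zero

end SymmetricNetwork

theorem no_long_periodic_orbit_of_symmetric_general
    {N : ℕ} (T : Fin N → Fin N → ℝ) (U : Fin N → ℝ)
    (hT : ∀ i j, T i j = T j i) :
    ¬ ∃ (s : ℕ) (f : Fin (s + 3) → Fin N → ℝ),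
        Function.Injective f ∧
        (∀ k i, f k i = 1 ∨ f k i = -1) ∧
        (∀ k i, (∑ j, T i j * f k j - U i) ≠ 0) ∧
        (∀ k i, f (k + 1) i =
          if 0 < ∑ j, T i j * f k j - U i then (1 : ℝ) else -1) := by
  rintro ⟨s, f, hinj, -, hfield, hstep⟩
  have hsymm : IsSymm (T : Matrix (Fin N) (Fin N) ℝ) := IsSymm.ext fun i j => hT j i
  have htwo := hinj (IsSyncStep.orbit_add_eq_sub hsymm hstep hfield 1)
  rw [sub_self, Fin.ext_iff, Fin.val_add, Fin.val_one, Fin.val_zero,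
    Nat.mod_eq_of_lt (by omega)] at htwo
  omega

/-- **No periodic orbits of length ≥ 3 in the synchronous McCulloch–Pitts network with
symmetric weights.**  Fix a symmetric real matrix `T` and thresholds `U`.  For the
deterministic synchronous dynamics `F(σ)_i = sign(h_i(σ))` on `{−1,1}^N`, where
`h_i(σ) = ∑_j T_{ij} σ_j − U_i` and `sign x = 1` if `x > 0`, `−1` if `x < 0`, there do
not exist pairwise distinct states `σ^(1), …, σ^(s)` with `s ≥ 3` such that
`h_i(σ^(k)) ≠ 0` for all `i, k` and `F(σ^(k)) = σ^(k+1)` cyclically. -/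
theorem no_long_periodic_orbit_of_symmetric
    {N : ℕ} (hN : 1 ≤ N) (T : Fin N → Fin N → ℝ) (U : Fin N → ℝ)
    (hT : ∀ i j, T i j = T j i) :
    ¬ ∃ (s : ℕ) (f : Fin (s + 3) → Fin N → ℝ),
        Function.Injective f ∧
        (∀ k i, f k i = 1 ∨ f k i = -1) ∧
        (∀ k i, (∑ j, T i j * f k j - U i) ≠ 0) ∧
        (∀ k i, f (k + 1) i =
          if 0 < ∑ j, T i j * f k j - U i then (1 : ℝ) else -1) :=
  no_long_periodic_orbit_of_symmetric_general T U hT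
end
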